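/- The infinity series contains no square: there is no position n and length m ≥ 1 such that s(n+i) = s(n+m+i) for all 0 ≤ i < m. -/
import Mathlib


def s : ℕ → ℤ
  | 0 => 0
  | n + 1 =>
    if (n + 1) % 2 = 0 then -s ((n + 1) / 2)
    else s (n / 2) + 1
decreasing_by all_goals omega

lemma s_odd (k : ℕ) : s (2 * k + 1) = s k + 1 := by
  rw [show 2*k+1 = (2*k)+1 from rfl, s]
  simp [Nat.mul_div_cancel_left, Nat.mul_mod_right]

lemma s_even (k : ℕ) : s (2 * k) = -s k := by
  cases k with
  | zero => simp [s]
  | succ k =>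
    rw [show 2*(k+1) = (2*k+1)+1 from rfl, s]
    rw [if_pos (by omega : (2*k+1+1) % 2 = 0), show (2*k+1+1)/2 = k+1 by omega]

lemma key : ∀ n : ℕ, ((s (n+1) - s n) % 2 = 0 → s (n+1) - s n ≤ -2) ∧
    ((s n + s (n+1)) % 2 = 1 → 1 ≤ s n + s (n+1)) := by
  intro n
  induction n using Nat.strong_induction_on with
  | _ n ih =>
    rcases Nat.even_or_odd n with ⟨a, ha⟩ | ⟨a, ha⟩
    · rw [show n = 2*a by omega, s_odd a, s_even a]
      omega
    · rw [show n = 2*a+1 by omega, show 2*a+1+1 = 2*(a+1) by ring, s_odd, s_even]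
      have h1 := (ih a (by omega)).1
      have h2 := (ih a (by omega)).2
      omega

lemma d_ne (n : ℕ) : s (n+1) ≠ s n := by
  intro h
  have := (key n).1
  omega

lemma no_square : ∀ m : ℕ, 1 ≤ m → ∀ n : ℕ, ¬ (∀ i < m, s (n + i) = s (n + m + i)) := by
  intro m
  induction m using Nat.strong_induction_on with
  | _ m ih =>
    intro hm n h
    rcases eq_or_lt_of_le hm with h1 | h1
    · -- m = 1
      have := h 0 (by omega)
      rw [← h1] at this
      exact d_ne n (by simpa using this.symm)
    · rcases Nat.even_or_odd m with ⟨b, hb⟩ | ⟨c, hc⟩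
      · -- m even, m = 2b, b ≥ 1
        rcases Nat.even_or_odd n with ⟨a, ha⟩ | ⟨a, ha⟩
        · refine ih b (by omega) (by omega) a (fun j hj => ?_)
          have := h (2*j) (by omega)
          rw [show n + 2*j = 2*(a+j) by omega, show n + m + 2*j = 2*(a+b+j) by omega,
            s_even, s_even] at this
          omega
        · refine ih b (by omega) (by omega) a (fun j hj => ?_)
          have := h (2*j) (by omega)
          rw [show n + 2*j = 2*(a+j)+1 by omega, show n + m + 2*j = 2*(a+b+j)+1 by omega,
            s_odd, s_odd] at this
          omega
      · -- m odd, m ≥ 3 since m > 1, m = 2c+1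
        have h0 := h 0 (by omega)
        have h1' := h 1 (by omega)
        rcases Nat.even_or_odd n with ⟨k, hk⟩ | ⟨k, hk⟩
        · rw [show n + 0 = 2*k by omega, show n + m + 0 = 2*(k+c)+1 by omega,
            s_even, s_odd] at h0
          rw [show n + 1 = 2*k+1 by omega, show n + m + 1 = 2*(k+c+1) by omega,
            s_odd, s_even] at h1'
          exact d_ne (k+c) (by omega)
        · rw [show n + 0 = 2*k+1 by omega, show n + m + 0 = 2*(k+c+1) by omega,
            s_odd, s_even] at h0
          rw [show n + 1 = 2*(k+1) by omega, show n + m + 1 = 2*(k+c+1)+1 by omega,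
            s_even, s_odd] at h1'
          exact d_ne k (by omega)

theorem stmt16 : ¬ ∃ (n m : ℕ), 1 ≤ m ∧ ∀ i < m, s (n + i) = s (n + m + i) := by
  rintro ⟨n, m, hm, h⟩
  exact no_square m hm n h
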